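/- Let d ≥ 1 and Λ′ ⊆ ℝ^d with Λ′ = −Λ′. Let u be a finitely supported ℂ^d-valued divergence-free vector field on Λ′ (Σ_j k_j u_j(k) = 0 for all k), and let a, b : Λ′ → ℂ be finitely supported scalar functions, with u, a, b all satisfying the reality condition. Then (u ∗ ∇a, b) + (a, u ∗ ∇b) = 0, where u ∗ ∇a = Σ_j u_j ∗ ∂_j a and (f, g) = Σ_k f(k) · conj(g(k)). In particular, taking a = b = ω gives conservation of enstrophy for the two-dimensional Euler equations on the lattice, and general a gives conservation of the vorticity flux Γ = (a, ω) for a Lagrangian marker a advected by the flow. -/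

import Mathlib

/-!
Both pairings are sums over triads `p + q + r = 0` of `T(f, g, h) = Σ_{p+q+r=0} f(p) g(q) h(r)`
(`triadSum`): the reality conditions turn `conj (b k)` into `b (-k)` and `conj ((u ∗ ∇b)(k))` into
`(u ∗ ∇b)(-k)`, so the left side is `Σ_j T(u_j, ∂_j a, b) + T(u_j, a, ∂_j b)`. Since `∂_j`
multiplies by `i k_j` and `p_j + q_j + r_j = 0` on a triad, `T` obeys the Leibniz rule
`T(∂_j f, g, h) + T(f, ∂_j g, h) + T(f, g, ∂_j h) = 0`. Hence the left side is
`-T(Σ_j ∂_j u_j, a, b)`, which vanishes because `u` is divergence free.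
-/

open scoped Classical

/-- The convolution product on a lattice `Λ ⊆ ℝ^d`:
`(f ∗ g)(k) = Σ_{p,q ∈ Λ, p+q=k} f(p) g(q)`. -/
noncomputable def latticeConv {d : ℕ} (Λ : Set (Fin d → ℝ))
    (f g : (Fin d → ℝ) → ℂ) (k : Fin d → ℝ) : ℂ :=
  ∑ᶠ p ∈ Λ, ∑ᶠ q ∈ Λ, if p + q = k then f p * g q else 0

/-- The reality condition `f(−k) = conj(f(k))`. -/
def RealityCond {d : ℕ} (f : (Fin d → ℝ) → ℂ) : Prop := ∀ k, f (-k) = star (f k)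

/-- The `j`-th lattice derivative `∂_j f(k) = i k_j f(k)`. -/
noncomputable def latticeDeriv {d : ℕ} (j : Fin d) (f : (Fin d → ℝ) → ℂ) :
    (Fin d → ℝ) → ℂ := fun k => Complex.I * (k j : ℂ) * f k

/-- The scalar advection `u ∗ ∇a = Σ_j u_j ∗ ∂_j a` on the lattice. -/
noncomputable def advectScalar {d : ℕ} (Λ : Set (Fin d → ℝ))
    (u : Fin d → (Fin d → ℝ) → ℂ) (a : (Fin d → ℝ) → ℂ) : (Fin d → ℝ) → ℂ :=
  fun k => ∑ j, latticeConv Λ (u j) (latticeDeriv j a) k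

open Function

section Finsum

variable {α β M : Type*} [AddCommMonoid M]

theorem finsum_mem_eq_finsum_of_support_subset (f : α → M) {s : Set α} (h : support f ⊆ s) :
    ∑ᶠ a ∈ s, f a = ∑ᶠ a, f a := by
  rw [finsum_mem_def, Set.indicator_eq_self.2 h]

theorem finsum_comm_of_finite (F : α → β → M) (hF : (support (uncurry F)).Finite) :
    ∑ᶠ a, ∑ᶠ b, F a b = ∑ᶠ b, ∑ᶠ a, F a b := by
  have hF' : (support (uncurry F ∘ Prod.swap)).Finite := by
    rw [support_comp_eq_preimage]
    exact hF.preimage Prod.swap_injective.injOn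
  calc ∑ᶠ a, ∑ᶠ b, F a b = ∑ᶠ x, uncurry F x := (finsum_curry _ hF).symm
    _ = ∑ᶠ y, uncurry F (Prod.swap y) := (finsum_comp_equiv (Equiv.prodComm β α)).symm
    _ = ∑ᶠ b, ∑ᶠ a, F a b := finsum_curry _ hF'

end Finsum

section Triad

variable {G R : Type*} [AddCommGroup G] [CommRing R]

noncomputable def triadSum (f g h : G → R) : R :=
  ∑ᶠ p, ∑ᶠ q, f p * g q * h (-(p + q))

theorem finsum_conv_mul_neg_eq_triadSum (f g h : G → R) (hf : (support f).Finite)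
    (hh : (support h).Finite) :
    ∑ᶠ k, (∑ᶠ p, f p * g (k - p)) * h (-k) = triadSum f g h := by
  have hfin : (support (uncurry fun k p => f p * g (k - p) * h (-k))).Finite := by
    refine ((hh.preimage neg_injective.injOn).prod hf).subset fun x hx => ?_
    simp only [mem_support] at hx
    exact ⟨right_ne_zero_of_mul hx, left_ne_zero_of_mul (left_ne_zero_of_mul hx)⟩
  calc ∑ᶠ k, (∑ᶠ p, f p * g (k - p)) * h (-k)
      = ∑ᶠ k, ∑ᶠ p, f p * g (k - p) * h (-k) := by
        refine finsum_congr fun k => finsum_mul' _ _ (hf.subset fun p hp => ?_)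
        exact left_ne_zero_of_mul hp
    _ = ∑ᶠ p, ∑ᶠ k, f p * g (k - p) * h (-k) := finsum_comm_of_finite _ hfin
    _ = triadSum f g h := by
        refine finsum_congr fun p => ?_
        rw [← finsum_comp_equiv (Equiv.addLeft p)]
        simp [add_sub_cancel_left]

theorem triadSum_comm_right (f g h : G → R) : triadSum f g h = triadSum f h g := by
  refine finsum_congr fun p => ?_
  rw [← finsum_comp_equiv (Equiv.subLeft (-p))]
  refine finsum_congr fun q => ?_
  rw [Equiv.subLeft_apply, show -(p + (-p - q)) = q by abel, show -(p + q) = -p - q by abel]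
  ring

theorem triadSum_eq_sum (f g h : G → R) {s t : Finset G} (hf : support f ⊆ s)
    (hg : support g ⊆ t) :
    triadSum f g h = ∑ p ∈ s, ∑ q ∈ t, f p * g q * h (-(p + q)) := by
  rw [triadSum, finsum_eq_sum_of_support_subset _ fun p hp => hf fun hfp => hp (by simp [hfp])]
  exact Finset.sum_congr rfl fun p _ => finsum_eq_sum_of_support_subset _ fun q hq =>
    hg (right_ne_zero_of_mul (left_ne_zero_of_mul hq))

theorem sum_triadSum_left {ι : Type*} (s : Finset ι) (f : ι → G → R) (g h : G → R)
    (hf : ∀ i ∈ s, (support (f i)).Finite) (hg : (support g).Finite) :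
    ∑ i ∈ s, triadSum (f i) g h = triadSum (fun p => ∑ i ∈ s, f i p) g h := by
  have hp : ∀ i ∈ s, (support fun p => ∑ᶠ q, f i p * g q * h (-(p + q))).Finite :=
    fun i hi => (hf i hi).subset fun p hp hfp => hp (by simp [hfp])
  have hq : ∀ p, ∀ i ∈ s, (support fun q => f i p * g q * h (-(p + q))).Finite :=
    fun p i _ => hg.subset fun q hq => right_ne_zero_of_mul (left_ne_zero_of_mul hq)
  simp only [triadSum, Finset.sum_mul]
  rw [sum_finsum_comm _ _ hp]
  exact finsum_congr fun p => sum_finsum_comm _ _ (hq p)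

end Triad

section Lattice

variable {d : ℕ} {Λ : Set (Fin d → ℝ)}

theorem support_latticeDeriv_subset (j : Fin d) (f : (Fin d → ℝ) → ℂ) :
    support (latticeDeriv j f) ⊆ support f :=
  fun _ hk => right_ne_zero_of_mul hk

theorem latticeConv_eq_finsum {f g : (Fin d → ℝ) → ℂ} (hf : support f ⊆ Λ)
    (hg : support g ⊆ Λ) (k : Fin d → ℝ) :
    latticeConv Λ f g k = ∑ᶠ p, f p * g (k - p) := by
  have hinner : ∀ p, (∑ᶠ q ∈ Λ, if p + q = k then f p * g q else 0) = f p * g (k - p) := by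
    intro p
    rw [finsum_mem_eq_finsum_of_support_subset _ fun q hq => hg fun hgq => hq (by simp [hgq]),
      finsum_eq_single _ (k - p) fun q hq => if_neg fun hpq => hq (by rw [← hpq]; abel),
      if_pos (add_sub_cancel p k)]
  simp only [latticeConv, hinner]
  exact finsum_mem_eq_finsum_of_support_subset _ fun p hp => hf (left_ne_zero_of_mul hp)

theorem RealityCond.latticeDeriv {f : (Fin d → ℝ) → ℂ} (hf : RealityCond f) (j : Fin d) :
    RealityCond (latticeDeriv j f) := by
  intro k
  simp only [_root_.latticeDeriv, hf k, Pi.neg_apply, Complex.ofReal_neg, star_mul',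
    Complex.star_def, Complex.conj_I, Complex.conj_ofReal]
  ring

theorem RealityCond.latticeConv {f g : (Fin d → ℝ) → ℂ} (hf : RealityCond f)
    (hg : RealityCond g) (hfin : (support f).Finite) (hfΛ : support f ⊆ Λ)
    (hgΛ : support g ⊆ Λ) : RealityCond (latticeConv Λ f g) := by
  intro k
  rw [latticeConv_eq_finsum hfΛ hgΛ, latticeConv_eq_finsum hfΛ hgΛ, Complex.star_def,
    map_finsum _ (hfin.subset fun p hp => left_ne_zero_of_mul hp),
    ← finsum_comp_equiv (Equiv.neg _)]
  refine finsum_congr fun p => ?_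
  rw [Equiv.neg_apply, hf, show -k - -p = -(k - p) by abel, hg, map_mul]
  rfl

variable {u : Fin d → (Fin d → ℝ) → ℂ} {c : (Fin d → ℝ) → ℂ}

theorem RealityCond.advectScalar (hu : ∀ i, RealityCond (u i)) (hc : RealityCond c)
    (hufin : ∀ i, (support (u i)).Finite) (huΛ : ∀ i, support (u i) ⊆ Λ)
    (hcΛ : support c ⊆ Λ) : RealityCond (advectScalar Λ u c) := by
  intro k
  simp only [_root_.advectScalar, star_sum]
  exact Finset.sum_congr rfl fun j _ => ((hu j).latticeConv (hc.latticeDeriv j) (hufin j) (huΛ j)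
    ((support_latticeDeriv_subset j c).trans hcΛ)) k

theorem finsum_advectScalar_mul_neg (hufin : ∀ i, (support (u i)).Finite)
    (huΛ : ∀ i, support (u i) ⊆ Λ) (hcΛ : support c ⊆ Λ) {h : (Fin d → ℝ) → ℂ}
    (hh : (support h).Finite) :
    ∑ᶠ k, advectScalar Λ u c k * h (-k) = ∑ j, triadSum (u j) (latticeDeriv j c) h := by
  have hcΛ' (j : Fin d) : support (latticeDeriv j c) ⊆ Λ :=
    (support_latticeDeriv_subset j c).trans hcΛ
  have hfin : ∀ j ∈ Finset.univ,
      (support fun k => latticeConv Λ (u j) (latticeDeriv j c) k * h (-k)).Finite :=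
    fun j _ => (hh.preimage neg_injective.injOn).subset fun k hk => right_ne_zero_of_mul hk
  simp only [_root_.advectScalar, Finset.sum_mul]
  rw [← sum_finsum_comm _ _ hfin]
  refine Finset.sum_congr rfl fun j _ => ?_
  simp only [latticeConv_eq_finsum (huΛ j) (hcΛ' j)]
  exact finsum_conv_mul_neg_eq_triadSum _ _ _ (hufin j) hh

theorem triadSum_latticeDeriv_add (j : Fin d) {f g : (Fin d → ℝ) → ℂ} (hf : (support f).Finite)
    (hg : (support g).Finite) (h : (Fin d → ℝ) → ℂ) :
    triadSum (latticeDeriv j f) g h + triadSum f (latticeDeriv j g) h +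
      triadSum f g (latticeDeriv j h) = 0 := by
  have hfs : support f ⊆ ↑(hf.toFinset ∪ hg.toFinset) := by simp
  have hgs : support g ⊆ ↑(hf.toFinset ∪ hg.toFinset) := by simp
  rw [triadSum_eq_sum _ _ _ ((support_latticeDeriv_subset j f).trans hfs) hgs,
    triadSum_eq_sum _ _ _ hfs ((support_latticeDeriv_subset j g).trans hgs),
    triadSum_eq_sum _ _ _ hfs hgs, ← Finset.sum_add_distrib, ← Finset.sum_add_distrib]
  refine Finset.sum_eq_zero fun p _ => ?_
  rw [← Finset.sum_add_distrib, ← Finset.sum_add_distrib]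
  refine Finset.sum_eq_zero fun q _ => ?_
  simp only [_root_.latticeDeriv, Pi.neg_apply, Pi.add_apply, Complex.ofReal_neg,
    Complex.ofReal_add]
  ring

theorem latticeDiv_eq_zero (huΛ : ∀ i, support (u i) ⊆ Λ)
    (hdiv : ∀ k ∈ Λ, ∑ j, (k j : ℂ) * u j k = 0) :
    (fun k => ∑ j, latticeDeriv j (u j) k) = 0 := by
  funext k
  by_cases hk : k ∈ Λ
  · simp only [_root_.latticeDeriv, mul_assoc, ← Finset.mul_sum, hdiv k hk, mul_zero,
      Pi.zero_apply]
  · have hu (j : Fin d) : u j k = 0 := by_contra fun hne => hk (huΛ j hne)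
    simp [_root_.latticeDeriv, hu]

end Lattice

theorem scalar_advection_identity_general (d : ℕ)
    (Λ : Set (Fin d → ℝ))
    (u : Fin d → (Fin d → ℝ) → ℂ) (a b : (Fin d → ℝ) → ℂ)
    (hufin : ∀ i, (Function.support (u i)).Finite)
    (husupp : ∀ i, Function.support (u i) ⊆ Λ)
    (hureal : ∀ i, RealityCond (u i))
    (hudiv : ∀ k ∈ Λ, ∑ j, (k j : ℂ) * u j k = 0)
    (hafin : (Function.support a).Finite) (hasupp : Function.support a ⊆ Λ)
    (hbfin : (Function.support b).Finite) (hbsupp : Function.support b ⊆ Λ)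
    (hbreal : RealityCond b) :
    (∑ᶠ k ∈ Λ, advectScalar Λ u a k * star (b k)) +
      (∑ᶠ k ∈ Λ, a k * star (advectScalar Λ u b k)) = 0 := by
  have h₁ : ∑ᶠ k ∈ Λ, advectScalar Λ u a k * star (b k) =
      ∑ j, triadSum (u j) (latticeDeriv j a) b := by
    rw [finsum_mem_eq_finsum_of_support_subset _ fun k hk =>
      hbsupp (star_ne_zero.1 (right_ne_zero_of_mul hk))]
    simp only [← hbreal _]
    exact finsum_advectScalar_mul_neg hufin husupp hasupp hbfin
  have h₂ : ∑ᶠ k ∈ Λ, a k * star (advectScalar Λ u b k) =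
      ∑ j, triadSum (u j) (latticeDeriv j b) a := by
    rw [finsum_mem_eq_finsum_of_support_subset _ fun k hk => hasupp (left_ne_zero_of_mul hk),
      ← finsum_advectScalar_mul_neg hufin husupp hbsupp hafin, ← finsum_comp_equiv (Equiv.neg _)]
    refine finsum_congr fun k => ?_
    rw [Equiv.neg_apply, ← (RealityCond.advectScalar hureal hbreal hufin husupp hbsupp) (-k),
      neg_neg, mul_comm]
  rw [h₁, h₂, ← Finset.sum_add_distrib]
  calc ∑ j, (triadSum (u j) (latticeDeriv j a) b + triadSum (u j) (latticeDeriv j b) a)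
      = -∑ j, triadSum (latticeDeriv j (u j)) a b := by
        rw [← Finset.sum_neg_distrib]
        refine Finset.sum_congr rfl fun j _ => ?_
        rw [triadSum_comm_right (u j) (latticeDeriv j b), eq_neg_iff_add_eq_zero, add_comm,
          ← add_assoc]
        exact triadSum_latticeDeriv_add j (hufin j) hafin b
    _ = -triadSum (fun p => ∑ j, latticeDeriv j (u j) p) a b := by
        rw [sum_triadSum_left _ _ _ _
          (fun j _ => (hufin j).subset (support_latticeDeriv_subset j _)) hafin]
    _ = 0 := by
        rw [latticeDiv_eq_zero husupp hudiv]
        simp [triadSum]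

/-- Scalar advection identity on a generalized lattice `Λ′ = −Λ′ ⊆ ℝ^d`: for a
finitely supported, divergence-free vector field `u` and finitely supported
scalars `a, b`, all satisfying the reality condition,
`(u ∗ ∇a, b) + (a, u ∗ ∇b) = 0`. In particular, `a = b = ω` gives conservation
of enstrophy for the 2D Euler equations on the lattice, and general `a` the
conservation of the vorticity flux `Γ = (a, ω)` for a Lagrangian marker `a`. -/
theorem scalar_advection_identity (d : ℕ) (hd : 1 ≤ d)
    (Λ : Set (Fin d → ℝ)) (hΛ : Λ = -Λ)
    (u : Fin d → (Fin d → ℝ) → ℂ) (a b : (Fin d → ℝ) → ℂ)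
    (hufin : ∀ i, (Function.support (u i)).Finite)
    (husupp : ∀ i, Function.support (u i) ⊆ Λ)
    (hureal : ∀ i, RealityCond (u i))
    (hudiv : ∀ k ∈ Λ, ∑ j, (k j : ℂ) * u j k = 0)
    (hafin : (Function.support a).Finite) (hasupp : Function.support a ⊆ Λ)
    (hareal : RealityCond a)
    (hbfin : (Function.support b).Finite) (hbsupp : Function.support b ⊆ Λ)
    (hbreal : RealityCond b) :
    (∑ᶠ k ∈ Λ, advectScalar Λ u a k * star (b k)) +
      (∑ᶠ k ∈ Λ, a k * star (advectScalar Λ u b k)) = 0 :=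
  scalar_advection_identity_general d Λ u a b hufin husupp hureal hudiv hafin hasupp hbfin hbsupp
    hbreal
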